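/- Let p be a position of w and let q be a child of p, i.e., η(p) ≤ q < η(p+1). Then the word a := w[η(p), q) is a proper prefix of φ([w(p)]) (a prefix of φ([w(p)]) with |a| < |φ([w(p)])|), and σ(q) = M·σ(p) + ψ(a). Moreover, q ↦ w[η(p), q) is a bijection between the children of p and the proper prefixes of φ([w(p)]). -/

import Mathlib

/-- The morphism φ on letters: φ(0)=03, φ(1)=43, φ(3)=1, φ(4)=01. -/
def phiLetter : ℕ → List ℕ
  | 0 => [0, 3]
  | 1 => [4, 3]
  | 3 => [1]
  | 4 => [0, 1]
  | _ => []

/-- The morphism φ on words, applied letterwise and concatenated. -/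
def phi (x : List ℕ) : List ℕ := x.flatMap phiLetter

/-- The fixed point `w` of φ beginning with 0: `w n` is the `n`-th letter of
`φ^k([0])` for any `k` with `|φ^k([0])| > n` (e.g. `k = n+1`). -/
def w (n : ℕ) : ℕ := (phi^[n + 1] [0]).getD n 0

/-- The factor `w[p, q) = (w p, …, w (q-1))`. -/
def factorW (p q : ℕ) : List ℕ := (List.range' p (q - p)).map w

/-- The Parikh map ψ, sending a word over `{0,1,3,4}` to `(|x|₀,|x|₁,|x|₃,|x|₄) ∈ ℤ⁴`. -/
def psi (x : List ℕ) : Fin 4 → ℤ :=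
  ![(x.count 0 : ℤ), (x.count 1 : ℤ), (x.count 3 : ℤ), (x.count 4 : ℤ)]

/-- The incidence matrix of φ. -/
def M : Matrix (Fin 4) (Fin 4) ℤ :=
  !![1, 0, 0, 1; 0, 0, 1, 1; 1, 1, 0, 0; 0, 1, 0, 0]

/-- `η(p) = |φ(w[0,p))|`. -/
def eta (p : ℕ) : ℕ := (phi ((List.range p).map w)).length

/-- `σ(p) = ψ(w[0,p))`, the Parikh vector of the prefix of `w` of length `p`. -/
def sigmaW (p : ℕ) : Fin 4 → ℤ := psi ((List.range p).map w)

/-- The parent of a position `x`: the unique `t` with `η(t) ≤ x < η(t+1)`. -/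
def par (x : ℕ) : ℕ := Nat.findGreatest (fun t => eta t ≤ x) x

/-!
The prefix `w[0, η(p))` of the fixed point is `φ(w[0, p))`, so appending the letter `w p`
to `w[0, p)` appends exactly `φ([w p])` to `w[0, η(p))`: the children of `p` are the
positions of `w` covered by `φ([w p])`, and `q` corresponds to its prefix of length
`q - η(p)`. The Parikh identity follows because `ψ ∘ φ = M ∘ ψ` letter by letter.
-/

lemma phi_append (x y : List ℕ) : phi (x ++ y) = phi x ++ phi y :=
  List.flatMap_append

lemma phi_cons (a : ℕ) (x : List ℕ) : phi (a :: x) = phiLetter a ++ phi x := rfl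

lemma phi_prefix_phi {x y : List ℕ} (h : x <+: y) : phi x <+: phi y := by
  obtain ⟨z, rfl⟩ := h
  exact ⟨phi z, (phi_append x z).symm⟩

def alphabet : Finset ℕ := {0, 1, 3, 4}

lemma mem_alphabet_of_mem_phiLetter {a b : ℕ} (h : b ∈ phiLetter a) : b ∈ alphabet := by
  match a with
  | 0 | 1 | 3 | 4 => simp [phiLetter, alphabet] at h ⊢; omega
  | 2 | _ + 5 => simp [phiLetter] at h

lemma mem_alphabet_of_mem_phi {x : List ℕ} {b : ℕ} (h : b ∈ phi x) : b ∈ alphabet := by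
  obtain ⟨a, -, hb⟩ := List.mem_flatMap.mp h
  exact mem_alphabet_of_mem_phiLetter hb

lemma length_le_length_phi {x : List ℕ} (hx : ∀ a ∈ x, a ∈ alphabet) :
    x.length ≤ (phi x).length := by
  induction x with
  | nil => simp [phi]
  | cons a x ih =>
    have ha : 1 ≤ (phiLetter a).length := by
      have := hx a List.mem_cons_self
      simp only [alphabet, Finset.mem_insert, Finset.mem_singleton] at this
      rcases this with rfl | rfl | rfl | rfl <;> simp [phiLetter]
    have := ih fun b hb => hx b (List.mem_cons_of_mem a hb)
    rw [phi_cons, List.length_append, List.length_cons]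
    omega

def wApprox (k : ℕ) : List ℕ := phi^[k] [0]

lemma wApprox_succ (k : ℕ) : wApprox (k + 1) = phi (wApprox k) :=
  Function.iterate_succ_apply' phi k [0]

lemma wApprox_prefix_wApprox_succ (k : ℕ) : wApprox k <+: wApprox (k + 1) := by
  induction k with
  | zero => exact ⟨[3], rfl⟩
  | succ k ih => rw [wApprox_succ, wApprox_succ]; exact phi_prefix_phi ih

lemma wApprox_prefix_of_le {k m : ℕ} (h : k ≤ m) : wApprox k <+: wApprox m :=
  Nat.le_induction (List.prefix_refl _) (fun m _ ih => ih.trans (wApprox_prefix_wApprox_succ m))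
    m h

lemma exists_wApprox_eq_zero_cons (k : ℕ) :
    ∃ t, wApprox k = 0 :: t ∧ ∀ a ∈ t, a ∈ alphabet := by
  induction k with
  | zero => exact ⟨[], rfl, by simp⟩
  | succ k ih =>
    obtain ⟨t, ht, -⟩ := ih
    refine ⟨3 :: phi t, by rw [wApprox_succ, ht, phi_cons]; rfl, ?_⟩
    intro a ha
    rcases List.mem_cons.mp ha with rfl | ha
    · decide
    · exact mem_alphabet_of_mem_phi ha

lemma lt_length_wApprox (k : ℕ) : k < (wApprox k).length := by
  induction k with
  | zero => simp [wApprox]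
  | succ k ih =>
    obtain ⟨t, ht, hmem⟩ := exists_wApprox_eq_zero_cons k
    have := length_le_length_phi hmem
    rw [ht, List.length_cons] at ih
    rw [wApprox_succ, ht, phi_cons, List.length_append]
    simp only [phiLetter, List.length_cons, List.length_nil]
    omega

lemma w_eq_getElem_wApprox {n k : ℕ} (h : n < (wApprox k).length) : w n = (wApprox k)[n] := by
  have hn : n < (wApprox (n + 1)).length := (Nat.lt_succ_self n).trans (lt_length_wApprox _)
  have hw : w n = (wApprox (n + 1))[n] := List.getD_eq_getElem _ _ hn
  rcases le_total k (n + 1) with hk | hk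
  · exact hw.trans ((wApprox_prefix_of_le hk).getElem h).symm
  · exact hw.trans ((wApprox_prefix_of_le hk).getElem hn)

lemma length_factorW (p q : ℕ) : (factorW p q).length = q - p := by simp [factorW]

lemma factorW_append {p q r : ℕ} (hpq : p ≤ q) (hqr : q ≤ r) :
    factorW p q ++ factorW q r = factorW p r := by
  have := List.range'_append (s := p) (m := q - p) (n := r - q) (step := 1)
  rw [Nat.one_mul, Nat.add_sub_cancel' hpq, show q - p + (r - q) = r - p by omega] at this
  simp only [factorW, ← List.map_append, this]

lemma map_w_range (p : ℕ) : (List.range p).map w = factorW 0 p := by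
  simp [factorW, List.range_eq_range']

lemma factorW_zero_eq_take {p k : ℕ} (h : p ≤ (wApprox k).length) :
    factorW 0 p = (wApprox k).take p := by
  apply List.ext_getElem
  · simp [length_factorW, h]
  · intro i hi _
    simp only [factorW, List.getElem_map, List.getElem_range', List.getElem_take]
    rw [length_factorW] at hi
    simpa using w_eq_getElem_wApprox (hi.trans_le h)

lemma factorW_take {p q r : ℕ} (hpq : p ≤ q) (hqr : q ≤ r) :
    factorW p q = (factorW p r).take (q - p) := by
  rw [← factorW_append hpq hqr, ← length_factorW p q, List.take_left]

lemma eta_eq (p : ℕ) : eta p = (phi (factorW 0 p)).length := by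
  rw [eta, map_w_range]

lemma phi_factorW_zero (p : ℕ) : phi (factorW 0 p) = factorW 0 (eta p) := by
  have hp : p ≤ (wApprox p).length := (lt_length_wApprox p).le
  have hpre : phi (factorW 0 p) <+: wApprox (p + 1) := by
    rw [wApprox_succ, factorW_zero_eq_take hp]
    exact phi_prefix_phi (List.take_prefix p _)
  have hlen : eta p ≤ (wApprox (p + 1)).length := by rw [eta_eq]; exact hpre.length_le
  rw [factorW_zero_eq_take hlen, eta_eq]
  exact List.prefix_iff_eq_take.mp hpre

lemma eta_succ (p : ℕ) : eta (p + 1) = eta p + (phi [w p]).length := by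
  simp [eta, List.range_succ, phi_append]

lemma eta_le_eta_succ (p : ℕ) : eta p ≤ eta (p + 1) := by
  rw [eta_succ]; omega

lemma factorW_eta_eta_succ (p : ℕ) : factorW (eta p) (eta (p + 1)) = phi [w p] := by
  have hsucc : factorW 0 (p + 1) = factorW 0 p ++ [w p] := by
    simp [← map_w_range, List.range_succ]
  have := phi_factorW_zero (p + 1)
  rw [hsucc, phi_append, phi_factorW_zero,
    ← factorW_append (Nat.zero_le _) (eta_le_eta_succ p)] at this
  exact (List.append_cancel_left this).symm

lemma factorW_eta_eq_take {p q : ℕ} (h₁ : eta p ≤ q) (h₂ : q ≤ eta (p + 1)) :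
    factorW (eta p) q = (phi [w p]).take (q - eta p) := by
  rw [factorW_take h₁ h₂, factorW_eta_eta_succ]

lemma psi_append (x y : List ℕ) : psi (x ++ y) = psi x + psi y := by
  funext i
  fin_cases i <;> simp [psi, List.count_append]

-- Letters outside `Σ` have Parikh vector `0` and empty image, so the identity holds for all `a`.
lemma psi_phiLetter (a : ℕ) : psi (phiLetter a) = M.mulVec (psi [a]) := by
  funext i
  match a with
  | 0 | 1 | 2 | 3 | 4 | _ + 5 =>
    fin_cases i <;> simp [psi, phiLetter, M, Matrix.mulVec, dotProduct, Fin.sum_univ_four]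

lemma psi_phi (x : List ℕ) : psi (phi x) = M.mulVec (psi x) := by
  induction x with
  | nil =>
    have h0 : psi [] = 0 := by funext i; fin_cases i <;> simp [psi]
    rw [show phi [] = [] from rfl, h0, Matrix.mulVec_zero]
  | cons a x ih =>
    rw [phi_cons, psi_append, psi_phiLetter, ih, ← Matrix.mulVec_add, ← psi_append]
    rfl

lemma sigmaW_eq_of_eta_le {p q : ℕ} (h : eta p ≤ q) :
    sigmaW q = M.mulVec (sigmaW p) + psi (factorW (eta p) q) := by
  rw [sigmaW, sigmaW, map_w_range, map_w_range, ← psi_phi, phi_factorW_zero, ← psi_append,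
    factorW_append (Nat.zero_le _) h]

/-- For a child `q` of `p` (i.e. `η(p) ≤ q < η(p+1)`), the word
`a = w[η(p), q)` is a proper prefix of `φ([w p])` and `σ(q) = M·σ(p) + ψ(a)`;
moreover `q ↦ w[η(p), q)` is a bijection from the children of `p` onto the proper
prefixes of `φ([w p])`. -/
theorem children_and_proper_prefixes :
    (∀ p q : ℕ, eta p ≤ q → q < eta (p + 1) →
      (factorW (eta p) q <+: phi [w p]) ∧
      (factorW (eta p) q).length < (phi [w p]).length ∧
      sigmaW q = M.mulVec (sigmaW p) + psi (factorW (eta p) q)) ∧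
    ∀ p : ℕ, Set.BijOn (fun q => factorW (eta p) q)
      {q | eta p ≤ q ∧ q < eta (p + 1)}
      {a | (a <+: phi [w p]) ∧ a.length < (phi [w p]).length} := by
  have child : ∀ p q : ℕ, eta p ≤ q → q < eta (p + 1) →
      (factorW (eta p) q <+: phi [w p]) ∧ (factorW (eta p) q).length < (phi [w p]).length :=
    fun p q h₁ h₂ => ⟨factorW_eta_eq_take h₁ h₂.le ▸ List.take_prefix _ _,
      by rw [eta_succ] at h₂; rw [length_factorW]; omega⟩
  refine ⟨fun p q h₁ h₂ => ⟨(child p q h₁ h₂).1, (child p q h₁ h₂).2, sigmaW_eq_of_eta_le h₁⟩,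
    fun p => ⟨fun q hq => child p q hq.1 hq.2, ?_, ?_⟩⟩
  · rintro q₁ ⟨h₁, -⟩ q₂ ⟨h₂, -⟩ heq
    have := congrArg List.length heq
    simp only [length_factorW] at this
    omega
  · rintro a ⟨hpre, hlen⟩
    have hle : eta p + a.length ≤ eta (p + 1) := by rw [eta_succ]; omega
    refine ⟨eta p + a.length, ⟨by omega, by rw [eta_succ]; omega⟩, ?_⟩
    simp only [factorW_eta_eq_take (Nat.le_add_right _ _) hle, Nat.add_sub_cancel_left]
    exact (List.prefix_iff_eq_take.mp hpre).symm
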